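/- arXiv:1411.7581 — 3 statements merged into one kernel-verified Lean document; each statement's English description precedes it below -/
import Mathlib

section
/- For every x ∈ ℝ^{k−1} lying outside the closure of the polytope 𝒫, the supremum defining Λ(x) is +∞; in particular no such x belongs to Ω. -/
open Finset

/-- The set Π of injective maps from {1,…,k−1} into {1,…,k}
(the first k−1 values of permutations of {1,…,k}); it has cardinality k!. -/
noncomputable def Pis (k : ℕ) : Finset (Fin (k - 1) → Fin k) :=
  Finset.univ.filter Function.Injective

/-- The averaged cumulant generating function κ. -/
noncomputable def kappa (b k : ℕ) (a : Fin b → Fin k → ℝ) (t : Fin (k - 1) → ℝ) : ℝ :=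
  (b : ℝ)⁻¹ * ∑ i : Fin b, Real.log ((k.factorial : ℝ)⁻¹ *
    ∑ π ∈ Pis k, Real.exp (∑ j : Fin (k - 1), t j * a i (π j)))

/-- The quantity tᵀx − κ(t) whose supremum over t defines Λ(x). -/
noncomputable def lamArg (b k : ℕ) (a : Fin b → Fin k → ℝ) (x t : Fin (k - 1) → ℝ) : ℝ :=
  (∑ j : Fin (k - 1), t j * x j) - kappa b k a t

/-- Λ(x) = sup_t ( tᵀx − κ(t) ), valued in ℝ ∪ {+∞} (EReal). -/
noncomputable def Lam (b k : ℕ) (a : Fin b → Fin k → ℝ) (x : Fin (k - 1) → ℝ) : EReal :=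
  ⨆ t : Fin (k - 1) → ℝ, ((lamArg b k a x t : ℝ) : EReal)

/-- The admissible domain Ω: points x at which the supremum defining Λ(x) is attained. -/
def Omega (b k : ℕ) (a : Fin b → Fin k → ℝ) : Set (Fin (k - 1) → ℝ) :=
  {x | ∃ t : Fin (k - 1) → ℝ, ∀ s : Fin (k - 1) → ℝ, lamArg b k a x s ≤ lamArg b k a x t}

/-- The column means Ā_j of the matrix A. -/
noncomputable def Abar (b k : ℕ) (a : Fin b → Fin k → ℝ) (j : Fin k) : ℝ :=
  (b : ℝ)⁻¹ * ∑ i : Fin b, a i j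

/-- The vertex Ā_π = (Ā_{π(1)}, …, Ā_{π(k−1)}). -/
noncomputable def AbarPi (b k : ℕ) (a : Fin b → Fin k → ℝ) (π : Fin (k - 1) → Fin k) :
    Fin (k - 1) → ℝ :=
  fun j => Abar b k a (π j)

/-- The polytope 𝒫, the convex hull of the points Ā_π for π ∈ Π. -/
noncomputable def PolyP (b k : ℕ) (a : Fin b → Fin k → ℝ) : Set (Fin (k - 1) → ℝ) :=
  convexHull ℝ {x | ∃ π ∈ Pis k, AbarPi b k a π = x}

lemma card_filter_le_val (n c : ℕ) :
    ((Finset.univ : Finset (Fin n)).filter (fun j => c ≤ j.val)).card = n - c := by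
  by_cases h : c < n
  · have : (Finset.univ : Finset (Fin n)).filter (fun j => c ≤ j.val) = Finset.Ici ⟨c, h⟩ := by
      ext j; simp [Fin.le_def]
    rw [this, Fin.card_Ici]
  · have : (Finset.univ : Finset (Fin n)).filter (fun j => c ≤ j.val) = ∅ := by
      ext j; simp; omega
    rw [this]; simp; omega
lemma sum_le_top_sum {n : ℕ} {g : Fin n → ℝ} (hg : Monotone g) (T : Finset (Fin n)) :
    ∑ j ∈ T, g j ≤ ∑ j ∈ univ.filter (fun j : Fin n => n - T.card ≤ j.val), g j := by
  classical
  set s := T.card with hs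
  set U := univ.filter (fun j : Fin n => n - s ≤ j.val) with hU
  have hsn : s ≤ n := by
    simpa using Finset.card_le_card (Finset.subset_univ T)
  have hUcard : U.card = s := by
    have := card_filter_le_val n (n - s)
    rw [hU, this]; omega
  have hq : (T \ U).card = (U \ T).card := by
    have h1 := Finset.card_sdiff_add_card_inter T U
    have h2 := Finset.card_sdiff_add_card_inter U T
    rw [Finset.inter_comm] at h2
    omega
  have key : ∑ j ∈ T \ U, g j ≤ ∑ j ∈ U \ T, g j := by
    rcases Nat.eq_zero_or_pos (T \ U).card with h0 | hpos
    · have e1 : T \ U = ∅ := Finset.card_eq_zero.1 h0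
      have e2 : U \ T = ∅ := Finset.card_eq_zero.1 (hq ▸ h0)
      simp [e1, e2]
    · have hs1 : 1 ≤ s := by
        obtain ⟨x, hx⟩ := Finset.card_pos.1 hpos
        have := Finset.card_le_card (Finset.sdiff_subset : T \ U ⊆ T)
        omega
    -- pivot
      have hn : n - s < n := by omega
      set p : Fin n := ⟨n - s, hn⟩ with hp
      have h1 : ∑ j ∈ T \ U, g j ≤ (T \ U).card • g p := by
        apply Finset.sum_le_card_nsmul
        intro x hx
        have hxU : ¬ (n - s ≤ x.val) := by
          have := (Finset.mem_sdiff.1 hx).2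
          simpa [hU] using this
        exact hg (by simp [hp, Fin.le_def]; omega)
      have h2 : (U \ T).card • g p ≤ ∑ j ∈ U \ T, g j := by
        apply Finset.card_nsmul_le_sum
        intro x hx
        have hxU : n - s ≤ x.val := by
          have := (Finset.mem_sdiff.1 hx).1
          simpa [hU] using this
        exact hg (by simp [hp, Fin.le_def]; omega)
      calc ∑ j ∈ T \ U, g j ≤ (T \ U).card • g p := h1
        _ = (U \ T).card • g p := by rw [hq]
        _ ≤ ∑ j ∈ U \ T, g j := h2
  have eT := Finset.sum_inter_add_sum_sdiff T U g
  have eU := Finset.sum_inter_add_sum_sdiff U T g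
  rw [Finset.inter_comm] at eU
  linarith
lemma filter_le_pred (n c : ℕ) (hc1 : 1 ≤ c) (hcn : c ≤ n) :
    (Finset.univ : Finset (Fin n)).filter (fun j => c - 1 ≤ j.val)
      = insert ⟨c - 1, by omega⟩ ((Finset.univ : Finset (Fin n)).filter (fun j => c ≤ j.val)) := by
  ext j; simp [Fin.ext_iff]; omega
lemma pred_not_mem (n c : ℕ) (hc1 : 1 ≤ c) (hcn : c ≤ n) :
    (⟨c - 1, by omega⟩ : Fin n) ∉ (Finset.univ : Finset (Fin n)).filter (fun j => c ≤ j.val) := by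
  simp; omega
lemma sum_le_theta_sum {n c r : ℕ} {g : Fin n → ℝ} (hg : Monotone g)
    (hneg : ∀ j : Fin n, j.val < r → g j < 0) (hpos : ∀ j : Fin n, r ≤ j.val → 0 ≤ g j)
    (hc1 : 1 ≤ c) (hcn : c ≤ n) (T : Finset (Fin n))
    (hTlo : n - c ≤ T.card) (hThi : T.card ≤ n + 1 - c) :
    ∑ j ∈ T, g j ≤
      ∑ j ∈ univ.filter (fun j : Fin n => (if r < c then c - 1 else c) ≤ j.val), g j := by
  classical
  have hTn : T.card ≤ n := by simpa using Finset.card_le_card (Finset.subset_univ T)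
  have h1 := sum_le_top_sum hg T
  set m := n - T.card with hm
  have hmcases : m = c ∨ m = c - 1 := by omega
  have hsplit : ∑ j ∈ (Finset.univ : Finset (Fin n)).filter (fun j => c - 1 ≤ j.val), g j
      = g ⟨c - 1, by omega⟩ + ∑ j ∈ (Finset.univ : Finset (Fin n)).filter (fun j => c ≤ j.val), g j := by
    rw [filter_le_pred n c hc1 hcn, Finset.sum_insert (pred_not_mem n c hc1 hcn)]
  by_cases hr : r < c
  · simp only [if_pos hr]
    rcases hmcases with h | h
    · -- m = c, θ = c - 1 : target bigger by nonneg term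
      rw [h] at h1
      have : 0 ≤ g ⟨c - 1, by omega⟩ := hpos _ (by simp; omega)
      rw [hsplit]; linarith
    · rw [h] at h1; exact h1
  · simp only [if_neg hr]
    rcases hmcases with h | h
    · rw [h] at h1; exact h1
    · -- m = c - 1, θ = c : drop negative term
      rw [h] at h1
      have : g ⟨c - 1, by omega⟩ < 0 := hneg _ (by simp; omega)
      linarith
lemma card_filter_not_le_val (n c : ℕ) (h : c ≤ n) :
    ((Finset.univ : Finset (Fin n)).filter (fun j => ¬ c ≤ j.val)).card = c := by
  have h1 := Finset.card_filter_add_card_filter_not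
    (s := (Finset.univ : Finset (Fin n))) (p := fun j : Fin n => c ≤ j.val)
  rw [card_filter_le_val] at h1
  simp at h1 ⊢
  omega
lemma T_card_bounds {n c : ℕ} (hc : c ≤ n + 1) (ψ : Fin n → Fin (n+1))
    (hψ : Function.Injective ψ) :
    n - c ≤ ((Finset.univ : Finset (Fin n)).filter (fun j => c ≤ (ψ j).val)).card ∧
      ((Finset.univ : Finset (Fin n)).filter (fun j => c ≤ (ψ j).val)).card ≤ n + 1 - c := by
  constructor
  · have h1 := Finset.card_filter_add_card_filter_not
      (s := (Finset.univ : Finset (Fin n))) (p := fun j : Fin n => c ≤ (ψ j).val)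
    have h2 : ((Finset.univ : Finset (Fin n)).filter (fun j => ¬ c ≤ (ψ j).val)).card
        ≤ ((Finset.univ : Finset (Fin (n+1))).filter (fun p => ¬ c ≤ p.val)).card := by
      apply Finset.card_le_card_of_injOn ψ
      · intro j hj; simp at hj ⊢; exact hj
      · exact fun x _ y _ h => hψ h
    rw [card_filter_not_le_val (n+1) c hc] at h2
    have h3 : ((Finset.univ : Finset (Fin n)).card) = n := by simp
    omega
  · have h2 : ((Finset.univ : Finset (Fin n)).filter (fun j => c ≤ (ψ j).val)).card
        ≤ ((Finset.univ : Finset (Fin (n+1))).filter (fun p => c ≤ p.val)).card := by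
      apply Finset.card_le_card_of_injOn ψ
      · intro j hj; simp at hj ⊢; exact hj
      · exact fun x _ y _ h => hψ h
    rw [card_filter_le_val] at h2
    omega
lemma card_filter_lt_val (n c : ℕ) (h : c ≤ n) :
    ((Finset.univ : Finset (Fin n)).filter (fun j => j.val < c)).card = c := by
  have e : ((Finset.univ : Finset (Fin n)).filter (fun j => j.val < c))
      = ((Finset.univ : Finset (Fin n)).filter (fun j => ¬ c ≤ j.val)) := by
    ext j; simp
  rw [e, card_filter_not_le_val n c h]
lemma sorted_sign {n : ℕ} {g : Fin n → ℝ} (hg : Monotone g) (j : Fin n) :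
    (j.val < ((Finset.univ : Finset (Fin n)).filter (fun i => g i < 0)).card ↔ g j < 0) := by
  set N := (Finset.univ : Finset (Fin n)).filter (fun i => g i < 0) with hN
  constructor
  · intro hj
    by_contra hge
    push_neg at hge
    have hsub : N ⊆ (Finset.univ : Finset (Fin n)).filter (fun i => i.val < j.val) := by
      intro i hi
      simp [hN] at hi
      simp
      by_contra hij
      push_neg at hij
      have : g j ≤ g i := hg (by exact hij)
      linarith
    have := Finset.card_le_card hsub
    rw [card_filter_lt_val n j.val (le_of_lt j.isLt)] at this
    omega
  · intro hgj
    have hsub : (Finset.univ : Finset (Fin n)).filter (fun i => i.val < j.val + 1) ⊆ N := by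
      intro i hi
      simp at hi
      simp [hN]
      have : g i ≤ g j := hg (by omega)
      linarith
    have := Finset.card_le_card hsub
    rw [card_filter_lt_val n (j.val + 1) j.isLt] at this
    omega
lemma range_ext {n p : ℕ} (hp : p ≤ n) (f : ℕ → ℝ) :
    ∑ m ∈ Finset.range p, f m = ∑ m ∈ Finset.range n, if m + 1 ≤ p then f m else 0 := by
  rw [← Finset.sum_filter]
  congr 1
  ext m; simp; omega
lemma abel_id {n : ℕ} (t : Fin n → ℝ) (a : Fin (n+1) → ℝ) (π : Fin n → Fin (n+1)) :
    ∑ j, t j * a (π j)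
      = (∑ j, t j) * a 0 + ∑ m ∈ Finset.range n,
          ((a ⟨min (m+1) n, by omega⟩ - a ⟨min m n, by omega⟩) *
            ∑ j ∈ Finset.univ.filter (fun j => m + 1 ≤ (π j).val), t j) := by
  classical
  set A : ℕ → ℝ := fun m => a ⟨min m n, by omega⟩ with hA
  have hA0 : A 0 = a 0 := by
    simp only [hA]
    congr 1
  have hval : ∀ j, a (π j) = A 0 + ∑ m ∈ Finset.range (π j).val, (A (m+1) - A m) := by
    intro j
    rw [Finset.sum_range_sub (fun m => A m)]
    have : A (π j).val = a (π j) := by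
      simp only [hA]
      congr 1
      ext
      simp [Nat.min_eq_left (Nat.lt_succ_iff.mp (π j).isLt)]
    rw [this]; ring
  calc ∑ j, t j * a (π j)
      = ∑ j, (t j * A 0 + ∑ m ∈ Finset.range n,
          (if m + 1 ≤ (π j).val then t j * (A (m+1) - A m) else 0)) := by
        apply Finset.sum_congr rfl
        intro j _
        rw [hval j, mul_add, Finset.mul_sum,
          range_ext (Nat.lt_succ_iff.mp (π j).isLt) (fun m => t j * (A (m+1) - A m))]
    _ = (∑ j, t j) * A 0 + ∑ m ∈ Finset.range n, ∑ j,
          (if m + 1 ≤ (π j).val then t j * (A (m+1) - A m) else 0) := by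
        rw [Finset.sum_add_distrib, ← Finset.sum_mul, Finset.sum_comm]
    _ = (∑ j, t j) * a 0 + ∑ m ∈ Finset.range n,
          ((A (m+1) - A m) * ∑ j ∈ Finset.univ.filter (fun j => m + 1 ≤ (π j).val), t j) := by
        rw [hA0]
        congr 1
        apply Finset.sum_congr rfl
        intro m _
        rw [← Finset.sum_filter, Finset.mul_sum]
        apply Finset.sum_congr rfl
        intro j _
        ring
lemma core_lemma (n : ℕ) (t : Fin n → ℝ) :
    ∃ π' : Fin n → Fin (n+1), Function.Injective π' ∧
      ∀ (a : Fin (n+1) → ℝ), Monotone a → ∀ π : Fin n → Fin (n+1), Function.Injective π →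
        ∑ j, t j * a (π j) ≤ ∑ j, t j * a (π' j) := by
  classical
  set σ := Tuple.sort t with hσ
  set g : Fin n → ℝ := t ∘ σ with hg
  have hmono : Monotone g := Tuple.monotone_sort t
  set r := ((univ : Finset (Fin n)).filter (fun i => g i < 0)).card with hr
  have hneg : ∀ j : Fin n, j.val < r → g j < 0 := fun j h => (sorted_sign hmono j).1 h
  have hpos : ∀ j : Fin n, r ≤ j.val → 0 ≤ g j := by
    intro j h
    by_contra hlt
    push_neg at hlt
    have := (sorted_sign hmono j).2 hlt
    omega
  have hb : ∀ j' : Fin n, (if (σ.symm j').val < r then (σ.symm j').val else (σ.symm j').val + 1) < n + 1 := by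
    intro j'
    have := (σ.symm j').isLt
    split <;> omega
  set π' : Fin n → Fin (n+1) := fun j' =>
    ⟨if (σ.symm j').val < r then (σ.symm j').val else (σ.symm j').val + 1, hb j'⟩ with hπ'
  have hπ'inj : Function.Injective π' := by
    intro j1 j2 h
    have h' := congrArg Fin.val h
    simp only [hπ'] at h'
    have : (σ.symm j1).val = (σ.symm j2).val := by split_ifs at h' <;> omega
    exact σ.symm.injective (Fin.ext this)
  refine ⟨π', hπ'inj, ?_⟩
  intro a hA π hπ
  have key : ∀ m ∈ Finset.range n,
      ∑ j ∈ univ.filter (fun j => m + 1 ≤ (π j).val), t j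
        ≤ ∑ j ∈ univ.filter (fun j => m + 1 ≤ (π' j).val), t j := by
    intro m hm
    rw [Finset.mem_range] at hm
    have reidx : ∀ ψ : Fin n → Fin (n+1),
        ∑ j ∈ univ.filter (fun j => m + 1 ≤ (ψ j).val), t j
          = ∑ j ∈ univ.filter (fun j => m + 1 ≤ (ψ (σ j)).val), g j := by
      intro ψ
      rw [Finset.sum_filter, Finset.sum_filter]
      exact (Equiv.sum_comp σ (fun j => if m + 1 ≤ (ψ j).val then t j else 0)).symm
    rw [reidx π, reidx π']
    have hπ'σ : ∀ j : Fin n, (π' (σ j)).val = if j.val < r then j.val else j.val + 1 := by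
      intro j
      simp [hπ', Equiv.symm_apply_apply]
    have hRHS : (univ.filter (fun j => m + 1 ≤ (π' (σ j)).val))
        = univ.filter (fun j : Fin n => (if r < m + 1 then m + 1 - 1 else m + 1) ≤ j.val) := by
      ext j
      have hj : ((σ.symm) (σ j)).val = j.val := by rw [Equiv.symm_apply_apply]
      simp only [Finset.mem_filter, Finset.mem_univ, true_and, hπ'σ]
      split_ifs <;> omega
    rw [hRHS]
    obtain ⟨hlo, hhi⟩ := T_card_bounds (c := m + 1) (by omega) (fun j => π (σ j))
      (hπ.comp σ.injective)
    exact sum_le_theta_sum hmono hneg hpos (by omega) (by omega) _ hlo hhi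
  rw [abel_id t a π, abel_id t a π']
  apply add_le_add le_rfl
  apply Finset.sum_le_sum
  intro m hm
  have hd : (0:ℝ) ≤ a ⟨min (m+1) n, by omega⟩ - a ⟨min m n, by omega⟩ := by
    apply sub_nonneg.2
    apply hA
    simp [Fin.le_def]
  exact mul_le_mul_of_nonneg_left (key m hm) hd
lemma mem_Pis {k : ℕ} (π : Fin (k-1) → Fin k) : π ∈ Pis k ↔ Function.Injective π := by
  simp [Pis]
lemma card_Pis (n : ℕ) : (Pis (n+1)).card = (n+1).factorial := by
  classical
  have h1 : (Pis (n+1)).card = Fintype.card {f : Fin n → Fin (n+1) // Function.Injective f} := by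
    rw [Fintype.card_subtype]; rfl
  rw [h1, Fintype.card_congr (Equiv.subtypeInjectiveEquivEmbedding (Fin n) (Fin (n+1))),
    Fintype.card_embedding_eq]
  simp only [Fintype.card_fin]
  have h2 := Nat.descFactorial_succ (n+1) n
  rw [Nat.descFactorial_self] at h2
  simp at h2
  omega
lemma Pis_nonempty (n : ℕ) : (Fin.castSucc : Fin n → Fin (n+1)) ∈ Pis (n+1) := by
  rw [mem_Pis]
  exact Fin.castSucc_injective n
lemma rep (n : ℕ) (f : (Fin n → ℝ) →L[ℝ] ℝ) (y : Fin n → ℝ) :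
    ∑ j, f (fun i => if j = i then (1:ℝ) else 0) * y j = f y := by
  conv_rhs => rw [pi_eq_sum_univ y]
  rw [map_sum]
  apply Finset.sum_congr rfl
  intro j _
  rw [map_smul]
  simp [mul_comm]

theorem stmt_11 (b k : ℕ) (hb : 1 ≤ b) (hk : 2 ≤ k) (a : Fin b → Fin k → ℝ)
    (ha : ∀ i : Fin b, StrictMono (a i)) :
    ∀ x : Fin (k - 1) → ℝ, x ∉ closure (PolyP b k a) →
      Lam b k a x = ⊤ ∧ x ∉ Omega b k a := by
  obtain ⟨n, rfl⟩ : ∃ n, k = n + 1 := ⟨k - 1, by omega⟩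
  intro x hx
  have hbpos : (0:ℝ) < b := by exact_mod_cast hb
  -- separation
  have hconv : Convex ℝ (closure (PolyP b (n+1) a)) := (convex_convexHull ℝ _).closure
  obtain ⟨f, u, hfu, hux⟩ := geometric_hahn_banach_closed_point hconv isClosed_closure hx
  set t : Fin n → ℝ := fun j => f (fun i => if j = i then (1:ℝ) else 0) with ht
  have hrep : ∀ y : Fin n → ℝ, ∑ j, t j * y j = f y := rep n f
  obtain ⟨π', hπ'inj, hπ'max⟩ := core_lemma n t
  have hπ'Pis : π' ∈ Pis (n+1) := (mem_Pis (k := n+1) π').2 hπ'inj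
  set M : ℝ := ∑ j, t j * Abar b (n+1) a (π' j) with hM
  have hMu : M < u := by
    have h1 : AbarPi b (n+1) a π' ∈ closure (PolyP b (n+1) a) :=
      subset_closure (subset_convexHull ℝ _ ⟨π', hπ'Pis, rfl⟩)
    have h2 := hfu _ h1
    have h3 : M = f (AbarPi b (n+1) a π') := by
      rw [hM, ← hrep (AbarPi b (n+1) a π')]; rfl
    linarith
  have hδ : 0 < f x - u := by linarith
  -- kappa bound
  have hkb : ∀ c : ℝ, 0 ≤ c → kappa b (n+1) a (c • t) ≤ c * M := by
    intro c hc
    have hSi : ∀ i, ∀ π ∈ Pis (n+1),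
        ∑ j, (c • t) j * a i (π j) ≤ c * ∑ j, t j * a i (π' j) := by
      intro i π hπmem
      have h1 : ∑ j, (c • t) j * a i (π j) = c * ∑ j, t j * a i (π j) := by
        rw [Finset.mul_sum]
        apply Finset.sum_congr rfl
        intro j _
        simp [mul_assoc]
      rw [h1]
      exact mul_le_mul_of_nonneg_left
        (hπ'max (a i) (ha i).monotone π ((mem_Pis π).1 hπmem)) hc
    have hlog : ∀ i : Fin b,
        Real.log ((((n+1).factorial : ℝ))⁻¹ *
          ∑ π ∈ Pis (n+1), Real.exp (∑ j, (c • t) j * a i (π j)))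
          ≤ c * ∑ j, t j * a i (π' j) := by
      intro i
      have hfacpos : (0:ℝ) < ((n+1).factorial : ℝ) := by
        exact_mod_cast Nat.factorial_pos (n+1)
      have hpos : 0 < (((n+1).factorial : ℝ))⁻¹ *
          ∑ π ∈ Pis (n+1), Real.exp (∑ j, (c • t) j * a i (π j)) := by
        apply mul_pos (by positivity)
        apply Finset.sum_pos (fun π _ => Real.exp_pos _) ⟨_, Pis_nonempty n⟩
      rw [Real.log_le_iff_le_exp hpos]
      have hsum : ∑ π ∈ Pis (n+1), Real.exp (∑ j, (c • t) j * a i (π j))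
          ≤ ((n+1).factorial : ℝ) * Real.exp (c * ∑ j, t j * a i (π' j)) := by
        calc ∑ π ∈ Pis (n+1), Real.exp (∑ j, (c • t) j * a i (π j))
            ≤ ∑ _π ∈ Pis (n+1), Real.exp (c * ∑ j, t j * a i (π' j)) := by
              apply Finset.sum_le_sum
              intro π hπmem
              exact Real.exp_le_exp.2 (hSi i π hπmem)
          _ = ((n+1).factorial : ℝ) * Real.exp (c * ∑ j, t j * a i (π' j)) := by
              rw [Finset.sum_const, card_Pis, nsmul_eq_mul]
      calc (((n+1).factorial : ℝ))⁻¹ *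
            ∑ π ∈ Pis (n+1), Real.exp (∑ j, (c • t) j * a i (π j))
          ≤ (((n+1).factorial : ℝ))⁻¹ *
            (((n+1).factorial : ℝ) * Real.exp (c * ∑ j, t j * a i (π' j))) := by
            apply mul_le_mul_of_nonneg_left hsum (by positivity)
        _ = Real.exp (c * ∑ j, t j * a i (π' j)) := by
            field_simp
    have hMrw : (b:ℝ)⁻¹ * ∑ i, (c * ∑ j, t j * a i (π' j)) = c * M := by
      rw [hM]
      rw [← Finset.mul_sum, Finset.sum_comm]
      have : ∀ j, (∑ i, t j * a i (π' j)) = t j * ∑ i, a i (π' j) := by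
        intro j; rw [Finset.mul_sum]
      calc (b:ℝ)⁻¹ * (c * ∑ j, ∑ i, t j * a i (π' j))
          = c * ∑ j, (b:ℝ)⁻¹ * ∑ i, t j * a i (π' j) := by
            simp only [Finset.mul_sum]
            apply Finset.sum_congr rfl
            intro j _
            apply Finset.sum_congr rfl
            intro i _
            ring
        _ = c * ∑ j, t j * Abar b (n+1) a (π' j) := by
            congr 1
            apply Finset.sum_congr rfl
            intro j _
            rw [this j, Abar]
            ring
    rw [kappa]
    calc (b:ℝ)⁻¹ * ∑ i, Real.log ((((n+1).factorial : ℝ))⁻¹ *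
          ∑ π ∈ Pis (n+1), Real.exp (∑ j, (c • t) j * a i (π j)))
        ≤ (b:ℝ)⁻¹ * ∑ i, (c * ∑ j, t j * a i (π' j)) := by
          apply mul_le_mul_of_nonneg_left (Finset.sum_le_sum (fun i _ => hlog i)) (by positivity)
      _ = c * M := hMrw
  -- lamArg lower bound
  have hlam : ∀ c : ℝ, 0 ≤ c → c * (f x - u) ≤ lamArg b (n+1) a x (c • t) := by
    intro c hc
    have h1 : ∑ j, (c • t) j * x j = c * f x := by
      rw [← hrep x, Finset.mul_sum]
      apply Finset.sum_congr rfl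
      intro j _
      simp [mul_assoc]
    have h2 := hkb c hc
    have h3 : c * M ≤ c * u := mul_le_mul_of_nonneg_left hMu.le hc
    rw [lamArg]
    have h1' : ∑ j : Fin (n+1-1), (c • t) j * x j = c * f x := h1
    rw [h1']
    nlinarith
  have hLamTop : Lam b (n+1) a x = ⊤ := by
    rw [Lam, iSup_eq_top]
    intro w hw
    obtain ⟨W, hwW, -⟩ := EReal.lt_iff_exists_real_btwn.1 hw
    set c : ℝ := max 1 ((W + 1) / (f x - u)) with hc
    have hc0 : (0:ℝ) ≤ c := le_trans zero_le_one (le_max_left _ _)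
    have hcδ : W + 1 ≤ c * (f x - u) := by
      calc W + 1 = ((W + 1) / (f x - u)) * (f x - u) :=
            (div_mul_cancel₀ _ (ne_of_gt hδ)).symm
        _ ≤ c * (f x - u) := by
            apply mul_le_mul_of_nonneg_right (le_max_right _ _) hδ.le
    refine ⟨c • t, ?_⟩
    have := hlam c hc0
    have hWlt : W < lamArg b (n+1) a x (c • t) := by linarith
    calc w < (W : EReal) := hwW
      _ < _ := by exact_mod_cast hWlt
  refine ⟨hLamTop, ?_⟩
  rintro ⟨t₀, hmax⟩
  have hle : Lam b (n+1) a x ≤ ((lamArg b (n+1) a x t₀ : ℝ) : EReal) :=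
    iSup_le fun s => by exact_mod_cast hmax s
  rw [hLamTop] at hle
  exact absurd hle (by simp)
end

section
/- The set { Ā_π : π ∈ Π } is exactly the set of extreme points of the polytope 𝒫; in particular, for every π̂ ∈ Π the point Ā_π̂ is an extreme point of 𝒫. -/
open Finset

/-- Rearrangement/Cauchy–Schwarz key inequality. -/
lemma key_lt (k : ℕ) (A : Fin k → ℝ) (hA : Function.Injective A)
    (phat p : Fin (k - 1) → Fin k) (hphat : Function.Injective phat)
    (hp : Function.Injective p) (hne : p ≠ phat)
    (cs : Fin k) (hcs : cs ∉ Finset.image phat Finset.univ) :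
    ∑ j, (A (phat j) - A cs) * A (p j) < ∑ j, (A (phat j) - A cs) * A (phat j) := by
  set g : Fin k → ℝ := fun c => A c - A cs with hg
  have hginj : Function.Injective g := fun x y h => hA (by
    have : A x - A cs = A y - A cs := h
    linarith)
  have hgcs : g cs = 0 := by simp [hg]
  clear_value g
  have hrw : ∀ q : Fin (k-1) → Fin k, ∑ j, (A (phat j) - A cs) * A (q j)
      = ∑ j, g (phat j) * g (q j) + A cs * ∑ j, g (phat j) := by
    intro q
    rw [Finset.mul_sum, ← Finset.sum_add_distrib]
    congr 1; ext j
    have h1 : g (phat j) = A (phat j) - A cs := by rw [hg]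
    have h2 : g (q j) = A (q j) - A cs := by rw [hg]
    rw [h1, h2]; ring
  rw [hrw p, hrw phat]
  have huniv : insert cs (Finset.image phat Finset.univ) = Finset.univ := by
    apply Finset.eq_univ_of_card
    rw [Finset.card_insert_of_notMem hcs, Finset.card_image_of_injective _ hphat]
    simp only [Finset.card_univ, Fintype.card_fin]
    have := cs.pos
    omega
  have hsq : ∑ j, g (p j) ^ 2 ≤ ∑ j, g (phat j) ^ 2 := by
    rw [← Finset.sum_image (s := Finset.univ) (g := p) (f := fun c => g c ^ 2)
        (fun x _ y _ h => hp h),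
        ← Finset.sum_image (s := Finset.univ) (g := phat) (f := fun c => g c ^ 2)
        (fun x _ y _ h => hphat h)]
    have h1 : ∑ c ∈ Finset.image p Finset.univ, g c ^ 2 ≤ ∑ c : Fin k, g c ^ 2 :=
      Finset.sum_le_sum_of_subset_of_nonneg (Finset.subset_univ _)
        (fun c _ _ => sq_nonneg _)
    have h2 : (∑ c : Fin k, g c ^ 2)
        = ∑ c ∈ Finset.image phat Finset.univ, g c ^ 2 := by
      rw [← huniv, Finset.sum_insert hcs, hgcs]
      ring
    linarith
  obtain ⟨j0, hj0⟩ : ∃ j, p j ≠ phat j := Function.ne_iff.1 hne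
  have hstrict : ∑ j, g (phat j) * g (p j)
      < ∑ j, (g (phat j) ^ 2 + g (p j) ^ 2) / 2 := by
    apply Finset.sum_lt_sum
    · intro j _
      have h := sq_nonneg (g (phat j) - g (p j))
      nlinarith
    refine ⟨j0, Finset.mem_univ _, ?_⟩
    have hne' : g (phat j0) ≠ g (p j0) := fun h => hj0 (hginj h).symm
    have h : 0 < (g (phat j0) - g (p j0)) ^ 2 :=
      sq_pos_of_ne_zero (sub_ne_zero.2 hne')
    nlinarith
  have hsplit : ∑ j, (g (phat j) ^ 2 + g (p j) ^ 2) / 2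
      = ((∑ j, g (phat j) ^ 2) + ∑ j, g (p j) ^ 2) / 2 := by
    rw [← Finset.sum_add_distrib, ← Finset.sum_div]
  have hfin : ∑ j, g (phat j) * g (p j) < ∑ j, g (phat j) * g (phat j) := by
    have heq : ∑ j, g (phat j) * g (phat j) = ∑ j, g (phat j) ^ 2 := by
      congr 1; ext j; ring
    rw [heq]; rw [hsplit] at hstrict; linarith
  linarith

/-- Each vertex is an exposed (hence extreme) point. -/
lemma vertex_exposed (b k : ℕ) (hb : 1 ≤ b) (hk : 2 ≤ k) (a : Fin b → Fin k → ℝ)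
    (ha : ∀ i : Fin b, StrictMono (a i)) (phat : Fin (k - 1) → Fin k)
    (hphat : phat ∈ Pis k) :
    AbarPi b k a phat ∈ Set.exposedPoints ℝ (PolyP b k a) := by
  classical
  have hbpos : (0 : ℝ) < (b : ℝ)⁻¹ := by positivity
  have hAmono : StrictMono (Abar b k a) := by
    intro x y hxy
    unfold Abar
    apply mul_lt_mul_of_pos_left _ hbpos
    apply Finset.sum_lt_sum_of_nonempty
    · exact Finset.univ_nonempty_iff.2 ⟨⟨0, hb⟩⟩
    · exact fun i _ => ha i hxy
  have hAinj : Function.Injective (Abar b k a) := hAmono.injective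
  have hphatinj : Function.Injective phat := (Finset.mem_filter.1 hphat).2
  -- the missing column
  obtain ⟨cs, hcs⟩ : ∃ c : Fin k, c ∉ Finset.image phat Finset.univ := by
    by_contra h
    push_neg at h
    have h2 : Finset.image phat Finset.univ = Finset.univ := Finset.eq_univ_iff_forall.2 h
    have h3 := congrArg Finset.card h2
    rw [Finset.card_image_of_injective _ hphatinj] at h3
    simp only [Finset.card_univ, Fintype.card_fin] at h3
    omega
  -- the linear functional
  set t : Fin (k - 1) → ℝ := fun j => Abar b k a (phat j) - Abar b k a cs with ht
  set l : (Fin (k - 1) → ℝ) →L[ℝ] ℝ :=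
    ∑ j, t j • (ContinuousLinearMap.proj j : (Fin (k - 1) → ℝ) →L[ℝ] ℝ) with hl
  have hlapp : ∀ y : Fin (k - 1) → ℝ, l y = ∑ j, t j * y j := by
    intro y
    rw [hl]
    simp [ContinuousLinearMap.sum_apply]
  set x := AbarPi b k a phat with hx
  set S : Finset (Fin (k - 1) → ℝ) := (Pis k).image (AbarPi b k a) with hS
  have hSet : {z | ∃ π ∈ Pis k, AbarPi b k a π = z} = (S : Set (Fin (k - 1) → ℝ)) := by
    ext z
    simp [hS, Finset.mem_image]
  have hxS : x ∈ S := Finset.mem_image.2 ⟨phat, hphat, rfl⟩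
  have hPoly : PolyP b k a = convexHull ℝ (S : Set (Fin (k - 1) → ℝ)) := by
    rw [PolyP, hSet]
  -- strict inequality for other vertices
  have hkey : ∀ π ∈ Pis k, AbarPi b k a π ≠ x → l (AbarPi b k a π) < l x := by
    intro π hπ hne
    have hπinj : Function.Injective π := (Finset.mem_filter.1 hπ).2
    have hπne : π ≠ phat := fun h => hne (by rw [h])
    rw [hlapp, hlapp]
    exact key_lt k (Abar b k a) hAinj phat π hphatinj hπinj hπne cs hcs
  have hboundS : ∀ p ∈ S, l p ≤ l x := by
    intro p hp
    obtain ⟨π, hπ, rfl⟩ := Finset.mem_image.1 hp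
    by_cases h : AbarPi b k a π = x
    · rw [h]
    · exact (hkey π hπ h).le
  -- bound on the hull
  have hbound : ∀ y ∈ PolyP b k a, l y ≤ l x := by
    rw [hPoly]
    intro y hy
    have hsub : (S : Set (Fin (k - 1) → ℝ)) ⊆ {w | l w ≤ l x} := fun p hp =>
      hboundS p hp
    have hcvx : Convex ℝ {w | l w ≤ l x} :=
      convex_halfSpace_le ⟨l.map_add, l.map_smul⟩ (l x)
    exact convexHull_min hsub hcvx hy
  -- equality case
  have huniq : ∀ y ∈ PolyP b k a, l x ≤ l y → y = x := by
    rw [hPoly]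
    intro y hy hle
    have hley : l y = l x := le_antisymm (hbound y (by rw [hPoly]; exact hy)) hle
    rw [Finset.convexHull_eq] at hy
    obtain ⟨w, hw0, hw1, hyc⟩ := hy
    rw [Finset.centerMass_eq_of_sum_1 _ _ hw1] at hyc
    simp only [id_eq] at hyc
    have hly : l y = ∑ p ∈ S, w p * l p := by
      rw [← hyc, map_sum]
      congr 1; ext p
      rw [map_smul, smul_eq_mul]
    have hzero : ∑ p ∈ S, w p * (l x - l p) = 0 := by
      have : ∑ p ∈ S, w p * (l x - l p)
          = (∑ p ∈ S, w p) * l x - ∑ p ∈ S, w p * l p := by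
        rw [Finset.sum_mul, ← Finset.sum_sub_distrib]
        congr 1; ext p; ring
      rw [this, hw1, ← hly, hley]
      ring
    have hterm : ∀ p ∈ S, w p * (l x - l p) = 0 :=
      (Finset.sum_eq_zero_iff_of_nonneg
        (fun p hp => mul_nonneg (hw0 p hp) (sub_nonneg.2 (hboundS p hp)))).1 hzero
    have hwz : ∀ p ∈ S, p ≠ x → w p = 0 := by
      intro p hp hpx
      obtain ⟨π, hπ, rfl⟩ := Finset.mem_image.1 hp
      have hlt := hkey π hπ hpx
      have := hterm _ hp
      rcases mul_eq_zero.1 this with h | h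
      · exact h
      · exfalso; rw [sub_eq_zero] at h; exact (ne_of_gt hlt) h
    have hwx : w x = 1 := by
      rw [← hw1]
      symm
      apply Finset.sum_eq_single_of_mem x hxS
      intro p hp hpx
      exact hwz p hp hpx
    rw [← hyc]
    rw [Finset.sum_eq_single_of_mem x hxS
      (fun p hp hpx => by rw [hwz p hp hpx, zero_smul])]
    rw [hwx, one_smul]
  refine ⟨?_, l, fun y hy => ⟨hbound y hy, huniq y hy⟩⟩
  rw [hPoly]
  exact subset_convexHull ℝ _ hxS

/-- the set { Ā_π : π ∈ Π } is exactly the set of extreme points of the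
polytope 𝒫; in particular each Ā_π̂ (π̂ ∈ Π) is an extreme point of 𝒫. -/
theorem stmt_13 (b k : ℕ) (hb : 1 ≤ b) (hk : 2 ≤ k) (a : Fin b → Fin k → ℝ)
    (ha : ∀ i : Fin b, StrictMono (a i)) :
    Set.extremePoints ℝ (PolyP b k a) = {x | ∃ π ∈ Pis k, AbarPi b k a π = x} ∧
    ∀ π ∈ Pis k, AbarPi b k a π ∈ Set.extremePoints ℝ (PolyP b k a) := by
  have hvert : ∀ π ∈ Pis k, AbarPi b k a π ∈ Set.extremePoints ℝ (PolyP b k a) :=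
    fun π hπ => exposedPoints_subset_extremePoints (vertex_exposed b k hb hk a ha π hπ)
  refine ⟨?_, hvert⟩
  apply Set.Subset.antisymm
  · intro y hy
    exact extremePoints_convexHull_subset hy
  · rintro y ⟨π, hπ, rfl⟩
    exact hvert π hπ
end

section
/- The gradient map κ′ : ℝ^{k−1} → ℝ^{k−1} is a bijection from ℝ^{k−1} onto the topological interior of the polytope 𝒫. -/
set_option maxHeartbeats 1000000
set_option synthInstance.maxHeartbeats 100000


open Finset

/-- The gradient map κ′ : ℝ^{k−1} → ℝ^{k−1} of κ, whose j-th component is the partial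
derivative of κ in the j-th coordinate direction. -/
noncomputable def kappaGrad (b k : ℕ) (a : Fin b → Fin k → ℝ) (t : Fin (k - 1) → ℝ) :
    Fin (k - 1) → ℝ :=
  fun j => fderiv ℝ (kappa b k a) t (Pi.single j 1)


section Aux
variable (b k : ℕ) (a : Fin b → Fin k → ℝ)

noncomputable def myW (i : Fin b) (π : Fin (k - 1) → Fin k) (t : Fin (k - 1) → ℝ) : ℝ :=
  Real.exp (∑ j : Fin (k - 1), t j * a i (π j))

noncomputable def myS (i : Fin b) (t : Fin (k - 1) → ℝ) : ℝ :=
  ∑ π ∈ Pis k, myW b k a i π t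

noncomputable def gradFun (t : Fin (k - 1) → ℝ) : Fin (k - 1) → ℝ :=
  fun j => (b : ℝ)⁻¹ * ∑ i : Fin b, (myS b k a i t)⁻¹ *
    ∑ π ∈ Pis k, myW b k a i π t * a i (π j)

noncomputable def myL (i : Fin b) (π : Fin (k - 1) → Fin k) :
    (Fin (k - 1) → ℝ) →L[ℝ] ℝ :=
  ∑ j : Fin (k - 1), a i (π j) • (ContinuousLinearMap.proj j :
    ((Fin (k - 1)) → ℝ) →L[ℝ] ℝ)

noncomputable def myD (t : Fin (k - 1) → ℝ) : (Fin (k - 1) → ℝ) →L[ℝ] ℝ :=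
  (b : ℝ)⁻¹ • ∑ i : Fin b, (myS b k a i t)⁻¹ •
    ∑ π ∈ Pis k, myW b k a i π t • myL b k a i π

lemma Pis_nonempty_s14 (hk : 2 ≤ k) : (Pis k).Nonempty :=
  ⟨Fin.castLE (Nat.sub_le k 1), by
    simp [Pis, Fin.castLE_injective]⟩

lemma myW_pos (i : Fin b) (π : Fin (k - 1) → Fin k) (t : Fin (k - 1) → ℝ) :
    0 < myW b k a i π t := Real.exp_pos _

lemma myS_pos (hk : 2 ≤ k) (i : Fin b) (t : Fin (k - 1) → ℝ) : 0 < myS b k a i t :=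
  Finset.sum_pos (fun π _ => myW_pos b k a i π t) (Pis_nonempty_s14 k hk)

lemma myL_apply (i : Fin b) (π : Fin (k - 1) → Fin k) (t : Fin (k - 1) → ℝ) :
    myL b k a i π t = ∑ j : Fin (k - 1), t j * a i (π j) := by
  simp [myL, mul_comm]

lemma hasFDerivAt_myW (i : Fin b) (π : Fin (k - 1) → Fin k) (t : Fin (k - 1) → ℝ) :
    HasFDerivAt (myW b k a i π) (myW b k a i π t • myL b k a i π) t := by
  have h1 : HasFDerivAt (fun t : Fin (k - 1) → ℝ => ∑ j : Fin (k - 1), t j * a i (π j))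
      (myL b k a i π) t := by
    have := (myL b k a i π).hasFDerivAt (x := t)
    refine this.congr_of_eventuallyEq ?_
    filter_upwards with s
    rw [myL_apply]
  exact h1.exp

lemma hasFDerivAt_kappa (hb : 1 ≤ b) (hk : 2 ≤ k) (t : Fin (k - 1) → ℝ) :
    HasFDerivAt (kappa b k a) (myD b k a t) t := by
  have hS : ∀ i : Fin b, HasFDerivAt (fun t => myS b k a i t)
      (∑ π ∈ Pis k, myW b k a i π t • myL b k a i π) t := by
    intro i
    exact HasFDerivAt.fun_sum (fun π _ => hasFDerivAt_myW b k a i π t)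
  have hfac : (0:ℝ) < (k.factorial : ℝ) := by positivity
  have hlog : ∀ i : Fin b, HasFDerivAt
      (fun t => Real.log ((k.factorial : ℝ)⁻¹ * myS b k a i t))
      ((myS b k a i t)⁻¹ • ∑ π ∈ Pis k, myW b k a i π t • myL b k a i π) t := by
    intro i
    have h2 := ((hS i).const_mul ((k.factorial : ℝ)⁻¹)).log (by
      have := myS_pos b k a hk i t
      positivity)
    have : ((k.factorial : ℝ)⁻¹ * myS b k a i t)⁻¹ •
        ((k.factorial : ℝ)⁻¹ • ∑ π ∈ Pis k, myW b k a i π t • myL b k a i π)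
        = (myS b k a i t)⁻¹ • ∑ π ∈ Pis k, myW b k a i π t • myL b k a i π := by
      rw [smul_smul, mul_inv]
      congr 1
      have hSpos := myS_pos b k a hk i t
      field_simp
    rwa [this] at h2
  have := (HasFDerivAt.fun_sum (fun i (_ : i ∈ Finset.univ) => hlog i)).const_mul ((b:ℝ)⁻¹)
  exact this

lemma kappaGrad_eq (hb : 1 ≤ b) (hk : 2 ≤ k) (t : Fin (k - 1) → ℝ) :
    kappaGrad b k a t = gradFun b k a t := by
  funext j
  have h := (hasFDerivAt_kappa b k a hb hk t).fderiv
  rw [kappaGrad, h]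
  have hL : ∀ i π, myL b k a i π (Pi.single j 1) = a i (π j) := by
    intro i π
    rw [myL_apply]
    simp [Pi.single_apply]
  simp only [myD, gradFun, ContinuousLinearMap.smul_apply, ContinuousLinearMap.sum_apply,
    smul_eq_mul]
  congr 1
  refine Finset.sum_congr rfl fun i _ => ?_
  congr 1
  refine Finset.sum_congr rfl fun π _ => ?_
  rw [hL]

end Aux


section Rearr
variable (k : ℕ) (u : Fin (k - 1) → ℝ)

def emb (k : ℕ) : Fin (k - 1) → Fin k := Fin.castLE (Nat.sub_le k 1)

lemma emb_inj (k : ℕ) : Function.Injective (emb k) := Fin.castLE_injective _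

noncomputable def uExt : Fin k → ℝ :=
  fun l => if h : (l : ℕ) < k - 1 then u ⟨l, h⟩ else 0

lemma sum_extend (hk : 2 ≤ k) (c : Fin k → ℝ) (g : Fin k → Fin k) :
    ∑ l : Fin k, uExt k u l * c (g l) = ∑ j : Fin (k - 1), u j * c (g (emb k j)) := by
  rw [← Finset.sum_filter_of_ne (p := fun l : Fin k => (l : ℕ) < k - 1)
    (fun l _ h => by
      by_contra hc
      exact h (by simp [uExt, hc]))]
  refine Finset.sum_nbij' (fun l => if h : (l : ℕ) < k - 1 then (⟨(l : ℕ), h⟩ : Fin (k-1))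
      else ⟨0, by omega⟩)
    (fun j => emb k j) ?_ ?_ ?_ ?_ ?_
  · intro l hl; simp
  · intro j _; simp only [Finset.mem_filter, Finset.mem_univ, true_and]; exact j.2
  · intro l hl
    simp only [Finset.mem_filter, Finset.mem_univ, true_and] at hl
    simp [hl, emb, Fin.ext_iff]
  · intro j _
    simp [emb, j.2, Fin.ext_iff]
  · intro l hl
    simp only [Finset.mem_filter, Finset.mem_univ, true_and] at hl
    simp [hl, uExt, emb, Fin.ext_iff]

lemma exists_unused {k : ℕ} (π : Fin (k - 1) → Fin k) (hπ : Function.Injective π)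
    (hk : 2 ≤ k) : ∃ m : Fin k, ∀ j, π j ≠ m := by
  have hns : ¬ Function.Surjective π := fun hs => by
    have := Fintype.card_le_of_surjective π hs
    simp only [Fintype.card_fin] at this
    omega
  simp only [Function.Surjective, not_forall, not_exists] at hns
  exact hns

lemma exists_extension {k : ℕ} (π : Fin (k - 1) → Fin k) (hπ : Function.Injective π)
    (hk : 2 ≤ k) : ∃ g : Fin k → Fin k, Function.Bijective g ∧ ∀ j, g (emb k j) = π j := by
  obtain ⟨m, hm⟩ := exists_unused π hπ hk
  refine ⟨fun l => if h : (l : ℕ) < k - 1 then π ⟨l, h⟩ else m, ?_, ?_⟩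
  · rw [← Finite.injective_iff_bijective]
    intro x y hxy
    dsimp only at hxy
    split_ifs at hxy with hx hy hy
    · have := hπ hxy; simp only [Fin.ext_iff] at this ⊢; omega
    · exact absurd hxy (hm _)
    · exact absurd hxy.symm (hm _)
    · exact Fin.ext (by omega)
  · intro j
    simp [emb, j.2]

end Rearr

section Main
variable (k : ℕ) (u : Fin (k - 1) → ℝ)

noncomputable def piStar : Fin (k - 1) → Fin k :=
  fun j => (Tuple.sort (uExt k u))⁻¹ (emb k j)

lemma piStar_inj : Function.Injective (piStar k u) :=
  fun _ _ h => emb_inj k ((Tuple.sort (uExt k u))⁻¹.injective h)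

lemma piStar_mem : piStar k u ∈ Pis k := by
  simp [Pis, piStar_inj]

lemma le_piStar (hk : 2 ≤ k) (c : Fin k → ℝ) (hc : Monotone c)
    (π : Fin (k - 1) → Fin k) (hπ : Function.Injective π) :
    ∑ j : Fin (k - 1), u j * c (π j) ≤ ∑ j : Fin (k - 1), u j * c (piStar k u j) := by
  set ρ := Tuple.sort (uExt k u) with hρ
  obtain ⟨g, hgbij, hgext⟩ := exists_extension π hπ hk
  have hL : ∑ j : Fin (k - 1), u j * c (π j) = ∑ l : Fin k, uExt k u l * c (g l) := by
    rw [sum_extend k u hk c g]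
    exact Finset.sum_congr rfl fun j _ => by rw [hgext]
  have hR : ∑ j : Fin (k - 1), u j * c (piStar k u j)
      = ∑ l : Fin k, uExt k u l * c (ρ⁻¹ l) := by
    rw [sum_extend k u hk c (fun l => ρ⁻¹ l)]
    exact Finset.sum_congr rfl fun j _ => by simp [piStar, hρ]
  rw [hL, hR]
  have hmono : Monovary (uExt k u ∘ ρ) c := by
    intro i j h
    have hij : i ≤ j := by
      by_contra hij
      exact absurd (hc (le_of_not_ge hij)) (not_le.mpr h)
    exact Tuple.monotone_sort (uExt k u) hij
  have key := hmono.sum_smul_comp_perm_le_sum_smul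
    (σ := ρ.trans (Equiv.ofBijective g hgbij))
  simp only [Function.comp_apply, smul_eq_mul, Equiv.trans_apply,
    Equiv.ofBijective_apply] at key
  calc ∑ l : Fin k, uExt k u l * c (g l)
      = ∑ m : Fin k, uExt k u (ρ m) * c (g (ρ m)) :=
        (Equiv.sum_comp ρ (fun l => uExt k u l * c (g l))).symm
    _ ≤ ∑ m : Fin k, uExt k u (ρ m) * c m := key
    _ = ∑ l : Fin k, uExt k u l * c (ρ⁻¹ l) := by
        rw [← Equiv.sum_comp ρ (fun l => uExt k u l * c (ρ⁻¹ l))]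
        exact Finset.sum_congr rfl fun m _ => by simp

lemma lt_piStar (hk : 2 ≤ k) (hu : u ≠ 0) (c : Fin k → ℝ) (hc : StrictMono c) :
    ∃ π, Function.Injective π ∧
      ∑ j : Fin (k - 1), u j * c (π j) < ∑ j : Fin (k - 1), u j * c (piStar k u j) := by
  obtain ⟨j₀, hj₀⟩ := Function.ne_iff.mp hu
  obtain ⟨m, hm⟩ := exists_unused (piStar k u) (piStar_inj k u) hk
  set π' := Function.update (piStar k u) j₀ m with hπ'
  have hinj : Function.Injective π' := by
    intro x y h
    by_cases hx : x = j₀ <;> by_cases hy : y = j₀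
    · rw [hx, hy]
    · exfalso
      rw [hπ', hx, Function.update_self, Function.update_of_ne hy] at h
      exact hm y h.symm
    · exfalso
      rw [hπ', hy, Function.update_self, Function.update_of_ne hx] at h
      exact hm x h
    · rw [hπ', Function.update_of_ne hx, Function.update_of_ne hy] at h
      exact piStar_inj k u h
  have hkey : ∑ j : Fin (k - 1), (u j * c (π' j) - u j * c (piStar k u j))
      = u j₀ * c m - u j₀ * c (piStar k u j₀) := by
    rw [Finset.sum_eq_single j₀]
    · rw [hπ', Function.update_self]
    · intro j _ hj
      rw [hπ', Function.update_of_ne hj, sub_self]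
    · intro h; exact absurd (Finset.mem_univ j₀) h
  have hdiff : ∑ j : Fin (k - 1), u j * c (π' j)
      ≠ ∑ j : Fin (k - 1), u j * c (piStar k u j) := by
    intro hEq
    rw [Finset.sum_sub_distrib, hEq, sub_self] at hkey
    have hne : c (piStar k u j₀) ≠ c m := fun hcm => hm j₀ (hc.injective hcm)
    have : u j₀ * (c m - c (piStar k u j₀)) = 0 := by linarith [hkey.symm]
    rcases mul_eq_zero.mp this with h | h
    · exact hj₀ h
    · exact hne (by linarith [sub_eq_zero.mp h])
  have hle := le_piStar k u hk c hc.monotone π' hinj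
  exact ⟨π', hinj, lt_of_le_of_ne hle hdiff⟩

end Main


-- Chebyshev-type strict inequality
lemma cheb {ι : Type*} (s : Finset ι) (p c : ι → ℝ) (hp : ∀ x ∈ s, 0 < p x)
    (hne : ∃ x ∈ s, ∃ y ∈ s, c x < c y) :
    (∑ x ∈ s, p x * c x) * (∑ x ∈ s, p x * Real.exp (c x)) <
      (∑ x ∈ s, p x * (c x * Real.exp (c x))) * (∑ x ∈ s, p x) := by
  have key : 0 < ∑ x ∈ s, ∑ y ∈ s,
      p x * p y * ((c y - c x) * (Real.exp (c y) - Real.exp (c x))) := by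
    rw [← Finset.sum_product']
    refine Finset.sum_pos' ?_ ?_
    · rintro ⟨x, y⟩ hxy
      simp only [Finset.mem_product] at hxy
      have h1 : 0 ≤ (c y - c x) * (Real.exp (c y) - Real.exp (c x)) := by
        rcases le_total (c x) (c y) with h | h
        · exact mul_nonneg (by linarith) (by linarith [Real.exp_le_exp.mpr h])
        · nlinarith [Real.exp_le_exp.mpr h]
      exact mul_nonneg (mul_nonneg (hp _ hxy.1).le (hp _ hxy.2).le) h1
    · obtain ⟨x, hx, y, hy, hxy⟩ := hne
      refine ⟨(x, y), Finset.mem_product.mpr ⟨hx, hy⟩, ?_⟩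
      have := Real.exp_lt_exp.mpr hxy
      exact mul_pos (mul_pos (hp _ hx) (hp _ hy)) (mul_pos (by linarith) (by linarith))
  have expand : ∑ x ∈ s, ∑ y ∈ s,
      p x * p y * ((c y - c x) * (Real.exp (c y) - Real.exp (c x)))
      = 2 * ((∑ x ∈ s, p x * (c x * Real.exp (c x))) * (∑ x ∈ s, p x))
        - 2 * ((∑ x ∈ s, p x * c x) * (∑ x ∈ s, p x * Real.exp (c x))) := by
    have h1 : ∀ x ∈ s, ∑ y ∈ s,
        p x * p y * ((c y - c x) * (Real.exp (c y) - Real.exp (c x)))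
        = p x * (∑ y ∈ s, p y * (c y * Real.exp (c y)))
          - p x * Real.exp (c x) * (∑ y ∈ s, p y * c y)
          - p x * c x * (∑ y ∈ s, p y * Real.exp (c y))
          + p x * (c x * Real.exp (c x)) * (∑ y ∈ s, p y) := by
      intro x _
      rw [Finset.mul_sum, Finset.mul_sum, Finset.mul_sum, Finset.mul_sum,
        ← Finset.sum_sub_distrib, ← Finset.sum_sub_distrib, ← Finset.sum_add_distrib]
      exact Finset.sum_congr rfl fun y _ => by ring
    rw [Finset.sum_congr rfl h1]
    rw [Finset.sum_add_distrib, Finset.sum_sub_distrib, Finset.sum_sub_distrib,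
      ← Finset.sum_mul, ← Finset.sum_mul, ← Finset.sum_mul, ← Finset.sum_mul]
    ring
  rw [expand] at key
  linarith


section Geo
variable (b k : ℕ) (a : Fin b → Fin k → ℝ)

lemma Abar_strictMono (hb : 1 ≤ b) (ha : ∀ i : Fin b, StrictMono (a i)) :
    StrictMono (Abar b k a) := by
  intro j j' hjj
  have hsum : ∑ i : Fin b, a i j < ∑ i : Fin b, a i j' := by
    refine Finset.sum_lt_sum_of_nonempty ?_ (fun i _ => ha i hjj)
    exact Finset.univ_nonempty_iff.mpr ⟨⟨0, by omega⟩⟩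
  have hbpos : (0:ℝ) < (b:ℝ)⁻¹ := by positivity
  exact mul_lt_mul_of_pos_left hsum hbpos

lemma grad_pr (t u : Fin (k - 1) → ℝ) :
    ∑ j : Fin (k-1), u j * gradFun b k a t j
      = (b : ℝ)⁻¹ * ∑ i : Fin b, (myS b k a i t)⁻¹ *
        ∑ π ∈ Pis k, myW b k a i π t * (∑ j : Fin (k-1), u j * a i (π j)) := by
  simp only [gradFun, Finset.mul_sum]
  rw [Finset.sum_comm]
  refine Finset.sum_congr rfl fun i _ => ?_
  rw [Finset.sum_comm]
  exact Finset.sum_congr rfl fun π _ => Finset.sum_congr rfl fun j _ => by ring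

lemma grad_lt (hb : 1 ≤ b) (hk : 2 ≤ k) (ha : ∀ i : Fin b, StrictMono (a i))
    (t : Fin (k-1) → ℝ) (u : Fin (k-1) → ℝ) (hu : u ≠ 0) :
    ∑ j : Fin (k-1), u j * gradFun b k a t j
      < ∑ j : Fin (k-1), u j * AbarPi b k a (piStar k u) j := by
  have hbpos : (0:ℝ) < (b:ℝ)⁻¹ := by positivity
  rw [grad_pr]
  have hRHS : ∑ j : Fin (k-1), u j * AbarPi b k a (piStar k u) j
      = (b:ℝ)⁻¹ * ∑ i : Fin b, ∑ j : Fin (k-1), u j * a i (piStar k u j) := by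
    simp only [AbarPi, Abar, Finset.mul_sum]
    rw [Finset.sum_comm]
    exact Finset.sum_congr rfl fun i _ => Finset.sum_congr rfl fun j _ => by ring
  rw [hRHS]
  refine mul_lt_mul_of_pos_left ?_ hbpos
  refine Finset.sum_lt_sum_of_nonempty (Finset.univ_nonempty_iff.mpr ⟨⟨0, by omega⟩⟩) ?_
  intro i _
  set M := ∑ j : Fin (k-1), u j * a i (piStar k u j) with hM
  have hSpos := myS_pos b k a hk i t
  have hlt : ∑ π ∈ Pis k, myW b k a i π t * (∑ j : Fin (k-1), u j * a i (π j))
      < myS b k a i t * M := by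
    have hSM : myS b k a i t * M = ∑ π ∈ Pis k, myW b k a i π t * M := by
      rw [myS, Finset.sum_mul]
    rw [hSM]
    obtain ⟨π', hπ'inj, hπ'lt⟩ := lt_piStar k u hk hu (a i) (ha i)
    refine Finset.sum_lt_sum ?_ ⟨π', ?_, ?_⟩
    · intro π hπ
      have hπinj : Function.Injective π := by simpa [Pis] using hπ
      exact mul_le_mul_of_nonneg_left
        (le_piStar k u hk (a i) (ha i).monotone π hπinj) (myW_pos b k a i π t).le
    · simp [Pis, hπ'inj]
    · exact mul_lt_mul_of_pos_left hπ'lt (myW_pos b k a i π' t)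
  calc (myS b k a i t)⁻¹ * ∑ π ∈ Pis k, myW b k a i π t * (∑ j : Fin (k-1), u j * a i (π j))
      < (myS b k a i t)⁻¹ * (myS b k a i t * M) :=
        mul_lt_mul_of_pos_left hlt (inv_pos.mpr hSpos)
    _ = M := by field_simp

lemma vertex_le (hb : 1 ≤ b) (hk : 2 ≤ k) (ha : ∀ i : Fin b, StrictMono (a i))
    (u : Fin (k-1) → ℝ) (π : Fin (k-1) → Fin k) (hπ : π ∈ Pis k) :
    ∑ j : Fin (k-1), u j * AbarPi b k a π j
      ≤ ∑ j : Fin (k-1), u j * AbarPi b k a (piStar k u) j := by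
  have hπ' : Function.Injective π := by simpa [Pis] using hπ
  exact le_piStar k u hk (Abar b k a) (Abar_strictMono b k a hb ha).monotone π hπ'

lemma polyP_le (hb : 1 ≤ b) (hk : 2 ≤ k) (ha : ∀ i : Fin b, StrictMono (a i))
    (u : Fin (k-1) → ℝ) {z : Fin (k-1) → ℝ} (hz : z ∈ PolyP b k a) :
    ∑ j : Fin (k-1), u j * z j
      ≤ ∑ j : Fin (k-1), u j * AbarPi b k a (piStar k u) j := by
  set M := ∑ j : Fin (k-1), u j * AbarPi b k a (piStar k u) j
  have hlin : IsLinearMap ℝ (fun w : Fin (k-1) → ℝ => ∑ j : Fin (k-1), u j * w j) := by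
    constructor
    · intro w w'; simp [mul_add, Finset.sum_add_distrib]
    · intro c w
      simp only [Pi.smul_apply, smul_eq_mul, Finset.mul_sum]
      exact Finset.sum_congr rfl fun j _ => by ring
  have hconv : Convex ℝ {w : Fin (k-1) → ℝ | (∑ j : Fin (k-1), u j * w j) ≤ M} :=
    convex_halfSpace_le hlin M
  have hsub : PolyP b k a ⊆ {w | (∑ j : Fin (k-1), u j * w j) ≤ M} := by
    rw [PolyP]
    refine convexHull_min ?_ hconv
    rintro w ⟨π, hπ, rfl⟩
    exact vertex_le b k a hb hk ha u π hπ
  exact hsub hz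

lemma update_inj {α β : Type*} [DecidableEq α] {π : α → β} (hπ : Function.Injective π)
    {m : β} (hm : ∀ j, π j ≠ m) (j₀ : α) : Function.Injective (Function.update π j₀ m) := by
  intro x y h
  by_cases hx : x = j₀ <;> by_cases hy : y = j₀
  · rw [hx, hy]
  · exfalso
    rw [hx, Function.update_self, Function.update_of_ne hy] at h
    exact hm y h.symm
  · exfalso
    rw [hy, Function.update_self, Function.update_of_ne hx] at h
    exact hm x h
  · rw [Function.update_of_ne hx, Function.update_of_ne hy] at h
    exact hπ h

lemma interior_nonempty (hb : 1 ≤ b) (hk : 2 ≤ k) (ha : ∀ i : Fin b, StrictMono (a i)) :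
    (interior (PolyP b k a)).Nonempty := by
  have hAmono := Abar_strictMono b k a hb ha
  set V : Set (Fin (k-1) → ℝ) := {x | ∃ π ∈ Pis k, AbarPi b k a π = x} with hV
  set lastk : Fin k := ⟨k-1, by omega⟩ with hlastk
  have hnotin : ∀ j : Fin (k-1), emb k j ≠ lastk := by
    intro j h
    have := j.2
    rw [Fin.ext_iff] at h
    simp only [emb, Fin.coe_castLE] at h
    simp [hlastk] at h
    omega
  have hp₀ : AbarPi b k a (emb k) ∈ V := ⟨emb k, by simp [Pis, emb_inj], rfl⟩
  have hpj : ∀ j : Fin (k-1), AbarPi b k a (Function.update (emb k) j lastk) ∈ V := by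
    intro j
    refine ⟨Function.update (emb k) j lastk, ?_, rfl⟩
    simp only [Pis, Finset.mem_filter, Finset.mem_univ, true_and]
    exact update_inj (emb_inj k) hnotin j
  have hPoly : PolyP b k a = convexHull ℝ V := rfl
  rw [hPoly, interior_convexHull_nonempty_iff_affineSpan_eq_top]
  rw [AffineSubspace.affineSpan_eq_top_iff_vectorSpan_eq_top_of_nonempty ℝ _ _ ⟨_, hp₀⟩]
  rw [Submodule.eq_top_iff']
  intro x
  have hx : x = ∑ j : Fin (k-1), x j • (Pi.single j 1 : Fin (k-1) → ℝ) := by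
    funext l
    simp [Finset.sum_apply, Pi.single_apply]
  rw [hx]
  refine Submodule.sum_mem _ fun j _ => ?_
  set coeff : ℝ := Abar b k a lastk - Abar b k a (emb k j) with hcoeff
  have hcpos : 0 < coeff := by
    have : emb k j < lastk := by
      rw [Fin.lt_def]
      simpa [emb, hlastk] using j.2
    have := hAmono this
    linarith
  have hsingle : (Pi.single j 1 : Fin (k-1) → ℝ)
      = coeff⁻¹ • (AbarPi b k a (Function.update (emb k) j lastk) - AbarPi b k a (emb k)) := by
    funext l
    by_cases hl : l = j
    · subst hl
      simp [AbarPi, Function.update_self, hcoeff, inv_mul_cancel₀ (ne_of_gt hcpos)]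
      exact (inv_mul_cancel₀ (ne_of_gt hcpos)).symm
    · simp [AbarPi, Function.update_of_ne hl, Pi.single_apply, hl]
  rw [hsingle, smul_smul]
  refine Submodule.smul_mem _ _ ?_
  have := vsub_mem_vectorSpan ℝ (hpj j) hp₀
  simpa using this

lemma grad_mem_interior (hb : 1 ≤ b) (hk : 2 ≤ k) (ha : ∀ i : Fin b, StrictMono (a i))
    (t : Fin (k-1) → ℝ) : gradFun b k a t ∈ interior (PolyP b k a) := by
  by_contra hy
  obtain ⟨z₀, hz₀⟩ := interior_nonempty b k a hb hk ha
  have hconv : Convex ℝ (PolyP b k a) := convex_convexHull ℝ _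
  obtain ⟨f, hf⟩ := geometric_hahn_banach_open_point hconv.interior isOpen_interior hy
  set y := gradFun b k a t
  set u : Fin (k-1) → ℝ := fun j => f (Pi.single j 1) with hu_def
  have hrepr : ∀ w : Fin (k-1) → ℝ, f w = ∑ j : Fin (k-1), u j * w j := by
    intro w
    have hw : w = ∑ j : Fin (k-1), w j • (Pi.single j 1 : Fin (k-1) → ℝ) := by
      funext l
      simp [Finset.sum_apply, Pi.single_apply]
    conv_lhs => rw [hw]
    rw [map_sum]
    simp only [map_smul, smul_eq_mul]
    exact Finset.sum_congr rfl fun j _ => by rw [hu_def]; ring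
  have hune : u ≠ 0 := by
    intro h0
    have : f z₀ < f y := hf z₀ hz₀
    rw [hrepr z₀, hrepr y, h0] at this
    simp at this
  -- f z ≤ f y for all z in PolyP
  have hPle : ∀ z ∈ PolyP b k a, f z ≤ f y := by
    intro z hz
    by_contra hgt
    push_neg at hgt
    have hcombo : ∀ θ : ℝ, 0 < θ → θ < 1 →
        (1 - θ) • z + θ • z₀ ∈ interior (PolyP b k a) := by
      intro θ h0 h1
      exact hconv.combo_closure_interior_mem_interior (subset_closure hz) hz₀
        (by linarith) h0 (by ring)
    have hval : ∀ θ : ℝ, 0 < θ → θ < 1 → (1 - θ) * f z + θ * f z₀ < f y := by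
      intro θ h0 h1
      have := hf _ (hcombo θ h0 h1)
      simpa [map_add, map_smul, smul_eq_mul] using this
    set C := f z - f z₀ with hC
    rcases le_or_gt C 0 with hC0 | hC0
    · have := hval (1/2) (by norm_num) (by norm_num)
      nlinarith
    · have hθ : 0 < min (1/2 : ℝ) ((f z - f y)/(2*C)) := by
        exact lt_min (by norm_num) (div_pos (by linarith) (by linarith))
      have hθ1 : min (1/2 : ℝ) ((f z - f y)/(2*C)) < 1 :=
        lt_of_le_of_lt (min_le_left _ _) (by norm_num)
      have := hval _ hθ hθ1
      have hle : min (1/2 : ℝ) ((f z - f y)/(2*C)) ≤ (f z - f y)/(2*C) := min_le_right _ _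
      have hCne : C ≠ 0 := ne_of_gt hC0
      have h2 : min (1/2 : ℝ) ((f z - f y)/(2*C)) * C ≤ (f z - f y)/2 := by
        calc min (1/2 : ℝ) ((f z - f y)/(2*C)) * C ≤ ((f z - f y)/(2*C)) * C :=
              mul_le_mul_of_nonneg_right hle hC0.le
          _ = (f z - f y)/2 := by field_simp
      nlinarith
  -- contradiction with strict inequality
  have hstar_mem : AbarPi b k a (piStar k u) ∈ PolyP b k a :=
    subset_convexHull ℝ _ ⟨piStar k u, piStar_mem k u, rfl⟩
  have h1 : f y < f (AbarPi b k a (piStar k u)) := by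
    rw [hrepr, hrepr]
    exact grad_lt b k a hb hk ha t u hune
  exact absurd (hPle _ hstar_mem) (not_le.mpr h1)

end Geo



section Surj
variable (b k : ℕ) (a : Fin b → Fin k → ℝ)

lemma kappa_ge (hb : 1 ≤ b) (hk : 2 ≤ k) (π : Fin (k-1) → Fin k) (hπ : π ∈ Pis k)
    (r : Fin (k-1) → ℝ) :
    (∑ j : Fin (k-1), r j * Abar b k a (π j)) - Real.log (k.factorial : ℝ)
      ≤ kappa b k a r := by
  have hfac : (0:ℝ) < (k.factorial : ℝ) := by positivity
  have hterm : ∀ i : Fin b, (∑ j : Fin (k-1), r j * a i (π j)) - Real.log (k.factorial : ℝ)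
      ≤ Real.log ((k.factorial : ℝ)⁻¹ * myS b k a i r) := by
    intro i
    have h1 : (k.factorial : ℝ)⁻¹ * myW b k a i π r ≤ (k.factorial : ℝ)⁻¹ * myS b k a i r := by
      refine mul_le_mul_of_nonneg_left ?_ (by positivity)
      exact Finset.single_le_sum (fun π' _ => (myW_pos b k a i π' r).le) hπ
    have h2 := Real.log_le_log (mul_pos (by positivity) (myW_pos b k a i π r)) h1
    rw [Real.log_mul (by positivity) (ne_of_gt (myW_pos b k a i π r)), Real.log_inv] at h2
    have h3 : Real.log (myW b k a i π r) = ∑ j : Fin (k-1), r j * a i (π j) := by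
      rw [myW, Real.log_exp]
    linarith
  have hbpos : (0:ℝ) < (b:ℝ) := by positivity
  have hsum : ∑ i : Fin b, ((∑ j : Fin (k-1), r j * a i (π j)) - Real.log (k.factorial : ℝ))
      ≤ ∑ i : Fin b, Real.log ((k.factorial : ℝ)⁻¹ * myS b k a i r) :=
    Finset.sum_le_sum fun i _ => hterm i
  have hmul := mul_le_mul_of_nonneg_left hsum (by positivity : (0:ℝ) ≤ (b:ℝ)⁻¹)
  have hLHS : (b:ℝ)⁻¹ * ∑ i : Fin b,
      ((∑ j : Fin (k-1), r j * a i (π j)) - Real.log (k.factorial : ℝ))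
      = (∑ j : Fin (k-1), r j * Abar b k a (π j)) - Real.log (k.factorial : ℝ) := by
    rw [Finset.sum_sub_distrib, Finset.sum_const, Finset.card_univ, Fintype.card_fin,
      mul_sub]
    congr 1
    · simp only [Abar, Finset.mul_sum]
      rw [Finset.sum_comm]
      exact Finset.sum_congr rfl fun i _ => Finset.sum_congr rfl fun j _ => by ring
    · rw [nsmul_eq_mul, ← mul_assoc, inv_mul_cancel₀ (ne_of_gt hbpos), one_mul]
  rw [hLHS] at hmul
  exact hmul.trans_eq rfl

lemma F_bound (hb : 1 ≤ b) (hk : 2 ≤ k) (ha : ∀ i : Fin b, StrictMono (a i))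
    {x : Fin (k-1) → ℝ} {ε : ℝ} (hε : 0 < ε) (hball : Metric.ball x ε ⊆ PolyP b k a)
    (r : Fin (k-1) → ℝ) :
    (∑ j : Fin (k-1), r j * x j) - kappa b k a r
      ≤ Real.log (k.factorial : ℝ) - (ε/2) * ‖r‖ := by
  set sgn : Fin (k-1) → ℝ := fun j => if 0 ≤ r j then 1 else -1 with hsgn
  set z : Fin (k-1) → ℝ := x + (ε/2) • sgn with hz
  have hzball : z ∈ Metric.ball x ε := by
    rw [Metric.mem_ball, dist_eq_norm]
    have : z - x = (ε/2) • sgn := by rw [hz]; abel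
    rw [this, norm_smul]
    have hsgn1 : ‖sgn‖ ≤ 1 := by
      refine (pi_norm_le_iff_of_nonneg (by norm_num)).mpr fun j => ?_
      rw [hsgn]
      dsimp only
      split_ifs <;> simp
    have : ‖(ε/2 : ℝ)‖ = ε/2 := by rw [Real.norm_eq_abs, abs_of_pos (by linarith)]
    rw [this]
    nlinarith
  have hzP : z ∈ PolyP b k a := hball hzball
  have hple := polyP_le b k a hb hk ha r hzP
  have hkge := kappa_ge b k a hb hk (piStar k r) (piStar_mem k r) r
  have hAP : ∑ j : Fin (k-1), r j * AbarPi b k a (piStar k r) j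
      = ∑ j : Fin (k-1), r j * Abar b k a (piStar k r j) := rfl
  have hzval : ∑ j : Fin (k-1), r j * z j
      = (∑ j : Fin (k-1), r j * x j) + (ε/2) * ∑ j : Fin (k-1), |r j| := by
    rw [hz]
    simp only [Pi.add_apply, Pi.smul_apply, smul_eq_mul, mul_add, Finset.sum_add_distrib]
    congr 1
    rw [Finset.mul_sum]
    refine Finset.sum_congr rfl fun j _ => ?_
    rw [hsgn]
    dsimp only
    split_ifs with h
    · rw [abs_of_nonneg h]; ring
    · rw [abs_of_neg (lt_of_not_ge h)]; ring
  have hnorm : ‖r‖ ≤ ∑ j : Fin (k-1), |r j| := by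
    refine (pi_norm_le_iff_of_nonneg ?_).mpr fun j => ?_
    · exact Finset.sum_nonneg fun j _ => abs_nonneg _
    · rw [Real.norm_eq_abs]
      exact Finset.single_le_sum (fun j' _ => abs_nonneg (r j')) (Finset.mem_univ j)
  have h1 : (∑ j : Fin (k-1), r j * x j) + (ε/2) * ∑ j : Fin (k-1), |r j|
      ≤ kappa b k a r + Real.log (k.factorial : ℝ) := by
    rw [← hzval]
    calc ∑ j : Fin (k-1), r j * z j
        ≤ ∑ j : Fin (k-1), r j * AbarPi b k a (piStar k r) j := hple
      _ ≤ kappa b k a r + Real.log (k.factorial : ℝ) := by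
          rw [hAP]; linarith
  have h2 : (ε/2) * ‖r‖ ≤ (ε/2) * ∑ j : Fin (k-1), |r j| :=
    mul_le_mul_of_nonneg_left hnorm (by linarith)
  linarith

lemma grad_surj (hb : 1 ≤ b) (hk : 2 ≤ k) (ha : ∀ i : Fin b, StrictMono (a i))
    {x : Fin (k-1) → ℝ} (hx : x ∈ interior (PolyP b k a)) :
    ∃ t : Fin (k-1) → ℝ, gradFun b k a t = x := by
  obtain ⟨ε, hε, hball⟩ := Metric.mem_nhds_iff.mp (mem_interior_iff_mem_nhds.mp hx)
  set F : (Fin (k-1) → ℝ) → ℝ := fun r => (∑ j : Fin (k-1), r j * x j) - kappa b k a r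
    with hF
  have hFbound := F_bound b k a hb hk ha hε hball
  have hcontκ : Continuous (kappa b k a) := continuous_iff_continuousAt.mpr
    (fun r => (hasFDerivAt_kappa b k a hb hk r).continuousAt)
  have hcontF : Continuous F := by
    refine Continuous.sub ?_ hcontκ
    exact continuous_finset_sum _ fun j _ => (continuous_apply j).mul continuous_const
  have hFbound' : ∀ r : Fin (k-1) → ℝ, F r ≤ Real.log (k.factorial : ℝ) - (ε/2) * ‖r‖ :=
    fun r => hFbound r
  have hFeq : ∀ r : Fin (k-1) → ℝ, F r = (∑ j : Fin (k-1), r j * x j) - kappa b k a r :=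
    fun r => rfl
  clear hF
  clear_value F
  set R : ℝ := max 1 ((Real.log (k.factorial : ℝ) - F 0) * (2/ε) + 1) with hR
  have hR1 : (1:ℝ) ≤ R := le_max_left _ _
  have hfar : ∀ r : Fin (k-1) → ℝ, R < ‖r‖ → F r < F 0 := by
    intro r hr
    have h1 : F r ≤ Real.log (k.factorial : ℝ) - (ε/2) * ‖r‖ := hFbound' r
    have h2 : (Real.log (k.factorial : ℝ) - F 0) * (2/ε) + 1 ≤ R := le_max_right _ _
    have hε2 : (0:ℝ) < ε/2 := by linarith
    have h3 : (ε/2) * R < (ε/2) * ‖r‖ := mul_lt_mul_of_pos_left hr hε2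
    have h4 : (Real.log (k.factorial : ℝ) - F 0) ≤ (ε/2) * R - ε/2 := by
      calc Real.log (k.factorial : ℝ) - F 0
          = (ε/2) * ((Real.log (k.factorial : ℝ) - F 0) * (2/ε)) := by
            field_simp
        _ = (ε/2) * ((Real.log (k.factorial : ℝ) - F 0) * (2/ε) + 1) - ε/2 := by ring
        _ ≤ (ε/2) * R - ε/2 := by nlinarith
    nlinarith [h1, h3, h4, hε2]
  obtain ⟨tm, htm_mem, htm_max⟩ := (isCompact_closedBall (0 : Fin (k-1) → ℝ) R).exists_isMaxOn
    ⟨0, by simp [Metric.mem_closedBall]; linarith⟩ hcontF.continuousOn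
  have hglobal : ∀ r, F r ≤ F tm := by
    intro r
    rcases le_or_gt ‖r‖ R with h | h
    · exact htm_max (by simpa [Metric.mem_closedBall, dist_eq_norm] using h)
    · have h0m : F 0 ≤ F tm := htm_max (by simp [Metric.mem_closedBall]; linarith)
      exact (hfar r h).le.trans h0m
  have hlocmax : IsLocalMax F tm := by
    have : IsMaxOn F Set.univ tm := fun r _ => hglobal r
    exact this.isLocalMax Filter.univ_mem
  set Lx : (Fin (k-1) → ℝ) →L[ℝ] ℝ := ∑ j : Fin (k-1), x j • (ContinuousLinearMap.proj j :
    ((Fin (k-1)) → ℝ) →L[ℝ] ℝ) with hLx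
  have hLx_apply : ∀ w : Fin (k-1) → ℝ, Lx w = ∑ j : Fin (k-1), w j * x j := by
    intro w
    simp [hLx, mul_comm]
  have hLx_deriv : HasFDerivAt (fun r : Fin (k-1) → ℝ => ∑ j : Fin (k-1), r j * x j) Lx tm := by
    refine Lx.hasFDerivAt.congr_of_eventuallyEq ?_
    filter_upwards with w
    rw [hLx_apply]
  have hFderiv : HasFDerivAt F (Lx - myD b k a tm) tm := by
    refine HasFDerivAt.congr_of_eventuallyEq
      (hLx_deriv.sub (hasFDerivAt_kappa b k a hb hk tm)) ?_
    filter_upwards with w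
    exact hFeq w
  have hzero : Lx - myD b k a tm = 0 := hlocmax.hasFDerivAt_eq_zero hFderiv
  have hDx : myD b k a tm = Lx := by
    have := sub_eq_zero.mp hzero
    exact this.symm
  refine ⟨tm, ?_⟩
  funext j
  have h1 : gradFun b k a tm j = kappaGrad b k a tm j := by
    rw [kappaGrad_eq b k a hb hk]
  rw [h1, kappaGrad, (hasFDerivAt_kappa b k a hb hk tm).fderiv, hDx, hLx_apply]
  simp [Pi.single_apply]

lemma grad_inj (hb : 1 ≤ b) (hk : 2 ≤ k) (ha : ∀ i : Fin b, StrictMono (a i)) :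
    Function.Injective (gradFun b k a) := by
  intro t s hts
  by_contra hne
  set u : Fin (k-1) → ℝ := fun j => s j - t j with hu
  have hune : u ≠ 0 := by
    intro h0
    apply hne
    funext j
    have : u j = 0 := by rw [h0]; rfl
    rw [hu] at this
    dsimp only at this
    linarith
  have hkey : ∀ i : Fin b,
      (myS b k a i t)⁻¹ * (∑ π ∈ Pis k, myW b k a i π t * (∑ j : Fin (k-1), u j * a i (π j)))
      < (myS b k a i s)⁻¹ *
        (∑ π ∈ Pis k, myW b k a i π s * (∑ j : Fin (k-1), u j * a i (π j))) := by
    intro i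
    set c : (Fin (k-1) → Fin k) → ℝ := fun π => ∑ j : Fin (k-1), u j * a i (π j) with hc
    set p : (Fin (k-1) → Fin k) → ℝ := fun π => myW b k a i π t with hp
    have hws : ∀ π, myW b k a i π s = p π * Real.exp (c π) := by
      intro π
      rw [hp, hc]
      unfold myW
      rw [← Real.exp_add]
      congr 1
      rw [← Finset.sum_add_distrib]
      refine Finset.sum_congr rfl fun j _ => ?_
      rw [hu]
      ring
    have hcheb := cheb (Pis k) p c (fun π _ => myW_pos b k a i π t) ?_
    · have hSt : myS b k a i t = ∑ π ∈ Pis k, p π := rfl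
      have hSs : myS b k a i s = ∑ π ∈ Pis k, p π * Real.exp (c π) := by
        rw [myS]
        exact Finset.sum_congr rfl fun π _ => hws π
      have hNs : ∑ π ∈ Pis k, myW b k a i π s * c π
          = ∑ π ∈ Pis k, p π * (c π * Real.exp (c π)) := by
        refine Finset.sum_congr rfl fun π _ => ?_
        rw [hws π]; ring
      have hStpos : (0:ℝ) < ∑ π ∈ Pis k, p π := myS_pos b k a hk i t
      have hSspos : (0:ℝ) < ∑ π ∈ Pis k, p π * Real.exp (c π) := by
        rw [← hSs]; exact myS_pos b k a hk i s
      rw [hSt, hSs, hNs]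
      rw [inv_mul_eq_div, inv_mul_eq_div, div_lt_div_iff₀ hStpos hSspos]
      calc (∑ π ∈ Pis k, p π * c π) * (∑ π ∈ Pis k, p π * Real.exp (c π))
          < (∑ π ∈ Pis k, p π * (c π * Real.exp (c π))) * (∑ π ∈ Pis k, p π) := hcheb
        _ = (∑ π ∈ Pis k, p π * (c π * Real.exp (c π))) * (∑ π ∈ Pis k, p π) := rfl
    · obtain ⟨π', hπ'inj, hπ'lt⟩ := lt_piStar k u hk hune (a i) (ha i)
      exact ⟨π', by simp [Pis, hπ'inj], piStar k u, piStar_mem k u, hπ'lt⟩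
  have hlt : ∑ j : Fin (k-1), u j * gradFun b k a t j
      < ∑ j : Fin (k-1), u j * gradFun b k a s j := by
    rw [grad_pr, grad_pr]
    refine mul_lt_mul_of_pos_left ?_ (by positivity)
    exact Finset.sum_lt_sum_of_nonempty (Finset.univ_nonempty_iff.mpr ⟨⟨0, by omega⟩⟩)
      (fun i _ => hkey i)
  rw [hts] at hlt
  exact lt_irrefl _ hlt

end Surj

/-- the gradient map κ′ is a bijection from ℝ^{k−1} onto the topological
interior of the polytope 𝒫. -/
theorem stmt_14 (b k : ℕ) (hb : 1 ≤ b) (hk : 2 ≤ k) (a : Fin b → Fin k → ℝ)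
    (ha : ∀ i : Fin b, StrictMono (a i)) :
    Set.BijOn (kappaGrad b k a) Set.univ (interior (PolyP b k a)) := by
  have hgeq : ∀ t, kappaGrad b k a t = gradFun b k a t := fun t => kappaGrad_eq b k a hb hk t
  refine ⟨?_, ?_, ?_⟩
  · intro t _
    rw [hgeq]
    exact grad_mem_interior b k a hb hk ha t
  · intro t _ s _ h
    rw [hgeq, hgeq] at h
    exact grad_inj b k a hb hk ha h
  · intro x hx
    obtain ⟨t, ht⟩ := grad_surj b k a hb hk ha hx
    exact ⟨t, Set.mem_univ t, by rw [hgeq]; exact ht⟩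
end
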